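/- arXiv:math/0401303 — 2 statements merged into one kernel-verified Lean document; each statement's English description precedes it below -/
import Mathlib

section
/- Let K be a countable division ring and let V and W be K-vector spaces (left K-modules) of the same uncountable cardinality. Then V and W are isomorphic as K-modules. -/
open Cardinal

/-- A basis of an uncountable free module is infinite, so `#M = max #ι #R = #ι`. -/
theorem Module.Free.rank_eq_mk_of_countable {R : Type u} {M : Type v} [Ring R]
    [StrongRankCondition R] [Countable R] [AddCommGroup M] [Module R M] [Module.Free R M]
    (hM : ℵ₀ < #M) : Module.rank R M = #M := by
  let b := chooseBasis R M
  have : Infinite (ChooseBasisIndex R M) := by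
    by_contra hfin
    have : Finite (ChooseBasisIndex R M) := not_infinite_iff_finite.mp hfin
    have : Countable M := b.repr.toEquiv.countable_iff.mpr inferInstance
    exact hM.not_ge (mk_le_aleph0_iff.mpr this)
  have := nontrivial_of_invariantBasisNumber R
  have hmk : lift.{u} #M = max (lift.{u} #(ChooseBasisIndex R M)) (lift.{v} #R) := by
    rw [← mk_finsupp_lift_of_infinite, ← mk_uLift]
    exact mk_congr (Equiv.ulift.trans b.repr.toEquiv)
  have hR : lift.{v} #R < lift.{u} #M :=
    calc lift.{v} #R ≤ ℵ₀ := lift_le_aleph0.mpr mk_le_aleph0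
      _ < lift.{u} #M := by simpa using hM
  apply (rank_le_card R M).antisymm
  rw [rank_eq_card_chooseBasisIndex, ← lift_le.{u}]
  exact (le_max_iff.mp hmk.le).resolve_right hR.not_ge

/-- Two vector spaces over a countable division ring with the same uncountable cardinality
are isomorphic as modules. -/
theorem vectorSpace_uncountably_categorical {K : Type u} [DivisionRing K] [Countable K]
    {V W : Type u} [AddCommGroup V] [Module K V] [AddCommGroup W] [Module K W]
    (hV : ℵ₀ < #V) (hVW : #V = #W) : Nonempty (V ≃ₗ[K] W) := by
  have hW : ℵ₀ < #W := hVW ▸ hV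
  exact ⟨LinearEquiv.ofRankEq V W (by
    rw [Module.Free.rank_eq_mk_of_countable hV, Module.Free.rank_eq_mk_of_countable hW, hVW])⟩
end

section
/- Let N ≥ 2 and let q₁,…,q_N and p₁,…,p_N be polynomials over ℂ in one variable such that each qᵢ is nonzero and pᵢ − pⱼ is nonconstant for all i ≠ j. Then there exists z ∈ ℂ such that ∑_{i=1}^{N} qᵢ(z)·exp(pᵢ(z)) = 0. -/
open Polynomial



lemma wk_step_ne_zero {Q d : ℂ[X]} (hQ : Q ≠ 0) (hd : d ≠ 0) :
    derivative Q + Q * d ≠ 0 := by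
  intro h
  have h1 : Q * d = -derivative Q := by linear_combination h
  by_cases hQ' : derivative Q = 0
  · rw [hQ', neg_zero] at h1; exact (mul_ne_zero hQ hd) h1
  · have hdeg : (Q * d).natDegree = Q.natDegree + d.natDegree := natDegree_mul hQ hd
    have h2 : Q.natDegree ≠ 0 := by
      intro h0
      have := Polynomial.eq_C_of_natDegree_eq_zero h0
      rw [this] at hQ'
      simp at hQ'
    have h3 : (derivative Q).natDegree < Q.natDegree := natDegree_derivative_lt h2
    rw [h1, natDegree_neg] at hdeg
    omega


lemma wk_hasDerivAt {M : ℕ} (R t : Fin M → ℂ[X]) (z : ℂ) :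
    HasDerivAt (fun w => ∑ i, (R i).eval w * Complex.exp ((t i).eval w))
      (∑ i, (derivative (R i) + R i * derivative (t i)).eval z *
        Complex.exp ((t i).eval z)) z := by
  have hterm : ∀ i : Fin M, HasDerivAt (fun w => (R i).eval w * Complex.exp ((t i).eval w))
      ((derivative (R i) + R i * derivative (t i)).eval z * Complex.exp ((t i).eval z)) z := by
    intro i
    have h1 := (R i).hasDerivAt z
    have h2 : HasDerivAt (fun w => Complex.exp ((t i).eval w))
        (Complex.exp ((t i).eval z) * (derivative (t i)).eval z) z :=
      (Complex.hasDerivAt_exp ((t i).eval z)).comp z ((t i).hasDerivAt z)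
    have h3 := h1.mul h2
    refine h3.congr_deriv ?_
    simp only [eval_add, eval_mul]
    ring
  exact HasDerivAt.fun_sum fun i _ => hterm i

lemma wk_deriv_step {M : ℕ} (R t : Fin M → ℂ[X])
    (h0 : ∀ z : ℂ, ∑ i, (R i).eval z * Complex.exp ((t i).eval z) = 0) :
    ∀ z : ℂ, ∑ i, (derivative (R i) + R i * derivative (t i)).eval z *
      Complex.exp ((t i).eval z) = 0 := by
  intro z
  have hsum := wk_hasDerivAt R t z
  have hzero : (fun w => ∑ i, (R i).eval w * Complex.exp ((t i).eval w)) = fun _ => (0:ℂ) :=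
    funext h0
  rw [hzero] at hsum
  exact hsum.unique (hasDerivAt_const z 0)

lemma wk_indep : ∀ (M : ℕ) (r s : Fin M → ℂ[X]),
    (∀ i j, i ≠ j → (s i - s j).natDegree ≠ 0) →
    (∀ z : ℂ, ∑ i, (r i).eval z * Complex.exp ((s i).eval z) = 0) →
    ∀ i, r i = 0 := by
  intro M
  induction M with
  | zero => intro r s _ _ i; exact i.elim0
  | succ m ih =>
    intro r s hs h0
    set lst := Fin.last m with hlstdef
    set t : Fin (m+1) → ℂ[X] := fun i => s i - s lst with ht
    have h0t : ∀ z : ℂ, ∑ i, (r i).eval z * Complex.exp ((t i).eval z) = 0 := by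
      intro z
      have hz := h0 z
      have h2 : ∑ i, (r i).eval z * Complex.exp ((t i).eval z)
          = (∑ i, (r i).eval z * Complex.exp ((s i).eval z)) * Complex.exp (-(s lst).eval z) := by
        rw [Finset.sum_mul]
        refine Finset.sum_congr rfl fun i _ => ?_
        rw [ht]
        simp only [eval_sub]
        rw [Complex.exp_sub, Complex.exp_neg, mul_assoc, div_eq_mul_inv]
      rw [h2, hz, zero_mul]
    set D : (Fin (m+1) → ℂ[X]) → (Fin (m+1) → ℂ[X]) :=
      fun R i => derivative (R i) + R i * derivative (t i) with hD
    have hDk : ∀ k, ∀ z : ℂ, ∑ i, ((D^[k] r) i).eval z * Complex.exp ((t i).eval z) = 0 := by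
      intro k
      induction k with
      | zero => simpa using h0t
      | succ n ihn =>
        rw [Function.iterate_succ_apply']
        exact wk_deriv_step _ _ ihn
    have htlast : t lst = 0 := sub_self _
    have hDlast : ∀ k, (D^[k] r) lst = derivative^[k] (r lst) := by
      intro k
      induction k with
      | zero => rfl
      | succ n ihn =>
        rw [Function.iterate_succ_apply', Function.iterate_succ_apply', hD]
        simp only [ihn, htlast]
        simp
        exact congrArg derivative ihn
    have hDne : ∀ (i : Fin (m+1)), i ≠ lst → r i ≠ 0 → ∀ k, (D^[k] r) i ≠ 0 := by
      intro i hi hri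
      have hd : derivative (t i) ≠ 0 := by
        intro h
        exact hs i lst hi (natDegree_eq_zero_of_derivative_eq_zero h)
      intro k
      induction k with
      | zero => exact hri
      | succ n ihn =>
        rw [Function.iterate_succ_apply', hD]
        exact wk_step_ne_zero ihn hd
    set k := (r lst).natDegree + 1 with hk
    have hRlast : (D^[k] r) lst = 0 := by
      rw [hDlast]; exact iterate_derivative_eq_zero (by omega)
    set r' : Fin m → ℂ[X] := fun i => (D^[k] r) i.castSucc with hr'
    set s' : Fin m → ℂ[X] := fun i => t i.castSucc with hs'def
    have hs' : ∀ i j : Fin m, i ≠ j → (s' i - s' j).natDegree ≠ 0 := by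
      intro i j hij
      have heq : s' i - s' j = s i.castSucc - s j.castSucc := by
        rw [hs'def]; simp only [ht]; ring
      rw [heq]
      exact hs _ _ (fun h => hij (Fin.castSucc_injective m h))
    have h0' : ∀ z : ℂ, ∑ i, (r' i).eval z * Complex.exp ((s' i).eval z) = 0 := by
      intro z
      have hz := hDk k z
      rw [Fin.sum_univ_castSucc, hRlast] at hz
      simpa using hz
    have hres := ih r' s' hs' h0'
    have hmain : ∀ i : Fin (m+1), i ≠ lst → r i = 0 := by
      intro i hi
      by_contra hri
      obtain ⟨j, rfl⟩ : ∃ j : Fin m, j.castSucc = i := by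
        rcases Fin.eq_castSucc_or_eq_last i with ⟨j, rfl⟩ | rfl
        · exact ⟨j, rfl⟩
        · exact absurd rfl hi
      exact hDne _ hi hri k (hres j)
    have hlast : r lst = 0 := by
      have hev : ∀ z : ℂ, (r lst).eval z = (0 : ℂ[X]).eval z := by
        intro z
        have hz := h0 z
        rw [Fin.sum_univ_castSucc] at hz
        rw [Finset.sum_eq_zero (fun i _ => by
          rw [hmain i.castSucc (Fin.castSucc_lt_last i).ne, eval_zero, zero_mul]), zero_add] at hz
        rcases mul_eq_zero.mp hz with h | h
        · simpa using h
        · exact absurd h (Complex.exp_ne_zero _)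
      exact Polynomial.funext hev
    intro i
    rcases eq_or_ne i lst with rfl | h
    · exact hlast
    · exact hmain i h


lemma wk_hasSum (h : ℂ → ℂ) (hh : Differentiable ℂ h) (z : ℂ) :
    HasSum (fun n : ℕ => ((n.factorial : ℂ)⁻¹ * iteratedDeriv n h 0) * z ^ n) (h z) := by
  have := Complex.hasSum_taylorSeries_of_entire hh 0 z
  convert this using 2 with n
  · rfl
  simp only [smul_eq_mul, sub_zero]
  ring

lemma wk_summable (h : ℂ → ℂ) (hh : Differentiable ℂ h) (R : ℝ) (hR : 0 < R) :
    Summable (fun n : ℕ => ‖(n.factorial : ℂ)⁻¹ * iteratedDeriv n h 0‖ * R ^ n) := by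
  set a : ℕ → ℂ := fun n => (n.factorial : ℂ)⁻¹ * iteratedDeriv n h 0 with ha
  have hsum := (wk_hasSum h hh ((2 * R : ℝ) : ℂ)).summable
  have htend : Filter.Tendsto (fun n => ‖a n * ((2 * R : ℝ) : ℂ) ^ n‖) Filter.atTop (nhds 0) :=
    by simpa only [norm_zero] using hsum.tendsto_atTop_zero.norm
  obtain ⟨M, hM⟩ := htend.bddAbove_range
  refine Summable.of_nonneg_of_le (fun n => by positivity)
    (fun n => ?_) ((summable_geometric_of_lt_one (by norm_num) (by norm_num : (1:ℝ)/2 < 1)).mul_left M)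
  have hMn : ‖a n * ((2 * R : ℝ) : ℂ) ^ n‖ ≤ M := hM ⟨n, rfl⟩
  have hnorm : ‖a n * ((2 * R : ℝ) : ℂ) ^ n‖ = ‖a n‖ * (2 * R) ^ n := by
    rw [norm_mul, norm_pow, Complex.norm_real, Real.norm_eq_abs, abs_of_pos (by linarith)]
  have h2 : ‖a n‖ * (2 * R) ^ n ≤ M := by rw [← hnorm]; exact hMn
  have h1 : ‖a n‖ * R ^ n = (‖a n‖ * (2 * R) ^ n) * (1 / 2) ^ n := by
    rw [mul_assoc, ← mul_pow]
    congr 2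
    ring
  rw [h1]
  exact mul_le_mul_of_nonneg_right h2 (by positivity)

lemma wk_exists_primitive (h : ℂ → ℂ) (hh : Differentiable ℂ h) :
    ∃ g : ℂ → ℂ, ∀ z, HasDerivAt g (h z) z := by
  set a : ℕ → ℂ := fun n => (n.factorial : ℂ)⁻¹ * iteratedDeriv n h 0 with ha
  refine ⟨fun z => ∑' n : ℕ, a n / ((n : ℂ) + 1) * z ^ (n + 1), fun z => ?_⟩
  set R : ℝ := ‖z‖ + 1 with hRdef
  have hR : 0 < R := by positivity
  have key : HasDerivAt (fun w => ∑' n : ℕ, a n / ((n : ℂ) + 1) * w ^ (n + 1))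
      (∑' n : ℕ, a n * z ^ n) z := by
    refine hasDerivAt_tsum_of_isPreconnected
      (g := fun n w => a n / ((n : ℂ) + 1) * w ^ (n + 1)) (g' := fun n w => a n * w ^ n)
      (wk_summable h hh R hR)
      Metric.isOpen_ball (convex_ball (0:ℂ) R).isPreconnected
      (fun n y _ => ?_) (fun n y hy => ?_) (Metric.mem_ball_self hR) ?_ ?_
    · have hder := (hasDerivAt_pow (n + 1) y).const_mul (a n / ((n : ℂ) + 1))
      convert hder using 1
      have : ((n : ℂ) + 1) ≠ 0 := Nat.cast_add_one_ne_zero n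
      · rfl
      rw [Nat.add_sub_cancel]; push_cast
      field_simp
    · rw [norm_mul, norm_pow]
      have hy' : ‖y‖ < R := by simpa [Metric.mem_ball] using hy
      gcongr
    · apply summable_of_ne_finset_zero (s := ∅)
      intro n _
      simp
    · simpa [Metric.mem_ball] using (by linarith : ‖z‖ < R)
  rwa [(wk_hasSum h hh z).tsum_eq] at key


lemma wk_BC (g : ℂ → ℂ) (hg : Differentiable ℂ g) (R A : ℝ) (hR : 0 < R)
    (hA : ∀ z : ℂ, ‖z‖ < R → (g z).re ≤ A) :
    ∀ z : ℂ, ‖z‖ ≤ R / 2 → ‖g z - g 0‖ ≤ 2 * (A - (g 0).re + 1) := by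
  set B : ℝ := A - (g 0).re + 1 with hBdef
  have h00 : (g 0).re ≤ A := hA 0 (by simpa using hR)
  have hB1 : 1 ≤ B := by simp only [hBdef]; linarith
  have hB0 : 0 < B := by linarith
  set c : ℂ := ((2 * B : ℝ) : ℂ) with hcdef
  set w : ℂ → ℂ := fun z => g z - g 0 with hwdef
  have hwre : ∀ z : ℂ, ‖z‖ < R → (w z).re ≤ B - 1 := by
    intro z hz
    simp only [hwdef, Complex.sub_re, hBdef]
    have := hA z hz
    linarith
  have hden : ∀ z : ℂ, ‖z‖ < R → c - w z ≠ 0 := by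
    intro z hz h
    have h1 : (c - w z).re = 2 * B - (w z).re := by
      simp [hcdef, Complex.sub_re]
    rw [h] at h1
    simp only [Complex.zero_re] at h1
    have := hwre z hz
    linarith
  have hlt : ∀ z : ℂ, ‖z‖ < R → ‖w z‖ < ‖c - w z‖ := by
    intro z hz
    have hsq : ‖w z‖ ^ 2 < ‖c - w z‖ ^ 2 := by
      have e1 : ‖w z‖ ^ 2 = (w z).re ^ 2 + (w z).im ^ 2 := by
        rw [Complex.sq_norm, Complex.normSq_apply]
        ring
      have e2 : ‖c - w z‖ ^ 2 = (2 * B - (w z).re) ^ 2 + (w z).im ^ 2 := by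
        rw [Complex.sq_norm, Complex.normSq_apply]
        simp only [Complex.sub_re, Complex.sub_im, hcdef, Complex.ofReal_re, Complex.ofReal_im]
        ring
      rw [e1, e2]
      have := hwre z hz
      nlinarith
    exact lt_of_pow_lt_pow_left₀ 2 (norm_nonneg _) hsq
  set φ : ℂ → ℂ := fun z => w z / (c - w z) with hφdef
  have hφ0 : φ 0 = 0 := by simp [hφdef, hwdef]
  have hφd : DifferentiableOn ℂ φ (Metric.ball 0 R) := by
    apply DifferentiableOn.div
    · exact (hg.sub_const _).differentiableOn
    · exact ((differentiable_const _).sub (hg.sub_const _)).differentiableOn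
    · intro z hz
      exact hden z (by simpa [Metric.mem_ball] using hz)
  have hmaps : Set.MapsTo φ (Metric.ball 0 R) (Metric.ball (φ 0) 1) := by
    intro z hz
    rw [hφ0, Metric.mem_ball, dist_zero_right]
    have hz' : ‖z‖ < R := by simpa [Metric.mem_ball] using hz
    rw [hφdef]
    simp only
    rw [norm_div]
    rw [div_lt_one (lt_of_le_of_lt (norm_nonneg _) (hlt z hz'))]
    exact hlt z hz'
  intro z hz
  rcases eq_or_ne z 0 with rfl | hz0
  · simp only [hwdef] at *
    simp
    linarith
  have hzball : z ∈ Metric.ball (0:ℂ) R := by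
    rw [Metric.mem_ball, dist_zero_right]
    linarith
  have hschwarz := Complex.norm_dslope_le_div_of_mapsTo_ball hφd (hmaps.mono_right Metric.ball_subset_closedBall) hzball
  have hds : dslope φ 0 z = z⁻¹ * φ z := by
    rw [dslope_of_ne _ hz0, slope_def_field]
    field_simp [hφ0]
    rw [hφ0]; ring
  have hφz : ‖φ z‖ ≤ 1 / 2 := by
    have h1 : ‖φ z‖ = ‖z‖ * ‖dslope φ 0 z‖ := by
      rw [hds, norm_mul, norm_inv, ← mul_assoc, mul_inv_cancel₀ (by simpa using hz0), one_mul]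
    rw [h1]
    calc ‖z‖ * ‖dslope φ 0 z‖ ≤ (R / 2) * (1 / R) := by
          apply mul_le_mul hz hschwarz (norm_nonneg _) (by linarith)
      _ = 1 / 2 := by field_simp
  have hzR : ‖z‖ < R := by linarith
  have hweq : w z = φ z * (c - w z) := by
    rw [hφdef]
    field_simp [hden z hzR]
  have hnc : ‖c‖ = 2 * B := by
    rw [hcdef, Complex.norm_real, Real.norm_eq_abs, abs_of_pos (by linarith)]
  have : ‖w z‖ ≤ (1/2) * (2 * B + ‖w z‖) := by
    have hwnorm : ‖w z‖ = ‖φ z‖ * ‖c - w z‖ := by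
      conv_lhs => rw [hweq]
      exact norm_mul _ _
    calc ‖w z‖ = ‖φ z‖ * ‖c - w z‖ := hwnorm
      _ ≤ (1/2) * (‖c‖ + ‖w z‖) := by
          apply mul_le_mul hφz (norm_sub_le _ _) (norm_nonneg _) (by norm_num)
      _ = (1/2) * (2 * B + ‖w z‖) := by rw [hnc]
  have hgoal : ‖w z‖ ≤ 2 * B := by linarith
  exact hgoal

lemma wk_polygrowth (g : ℂ → ℂ) (hg : Differentiable ℂ g) (B : ℝ) (m : ℕ) (hB : 0 ≤ B)
    (hre : ∀ z : ℂ, (g z).re ≤ B * (1 + ‖z‖) ^ m) :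
    ∃ C : ℝ, ∀ z : ℂ, ‖g z‖ ≤ C * (1 + ‖z‖) ^ m := by
  refine ⟨‖g 0‖ + 2 * (B * 3 ^ m + |(g 0).re| + 1), fun z => ?_⟩
  set R : ℝ := 2 * ‖z‖ + 2 with hRdef
  have hR : 0 < R := by positivity
  have hA : ∀ w : ℂ, ‖w‖ < R → (g w).re ≤ B * (1 + R) ^ m := by
    intro w hw
    refine le_trans (hre w) ?_
    exact mul_le_mul_of_nonneg_left (pow_le_pow_left₀ (by positivity) (by linarith) m) hB
  have hbc := wk_BC g hg R (B * (1 + R) ^ m) hR hA z (by linarith [norm_nonneg z])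
  have h1 : (1 + R) ^ m ≤ 3 ^ m * (1 + ‖z‖) ^ m := by
    rw [← mul_pow]
    apply pow_le_pow_left₀ (by linarith)
    linarith [norm_nonneg z]
  have h2 : (1:ℝ) ≤ (1 + ‖z‖) ^ m := one_le_pow₀ (by linarith [norm_nonneg z])
  have key : ‖g z‖ ≤ ‖g 0‖ + 2 * (B * (1 + R) ^ m + |(g 0).re| + 1) := by
    have h3 : ‖g z‖ ≤ ‖g 0‖ + ‖g z - g 0‖ := by
      calc ‖g z‖ = ‖g 0 + (g z - g 0)‖ := by ring_nf
        _ ≤ ‖g 0‖ + ‖g z - g 0‖ := norm_add_le _ _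
    have h4 : -(g 0).re ≤ |(g 0).re| := neg_le_abs _
    linarith
  have hBR : B * (1 + R) ^ m ≤ B * 3 ^ m * (1 + ‖z‖) ^ m := by
    rw [mul_assoc]
    exact mul_le_mul_of_nonneg_left h1 hB
  have hg0 : ‖g 0‖ ≤ ‖g 0‖ * (1 + ‖z‖) ^ m := le_mul_of_one_le_right (norm_nonneg _) h2
  have habs : |(g 0).re| ≤ |(g 0).re| * (1 + ‖z‖) ^ m := le_mul_of_one_le_right (abs_nonneg _) h2
  nlinarith [key, hBR, hg0, habs, h2]


lemma wk_poly : ∀ (m : ℕ) (g : ℂ → ℂ), Differentiable ℂ g → ∀ C : ℝ,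
    (∀ z : ℂ, ‖g z‖ ≤ C * (1 + ‖z‖) ^ m) → ∃ P : ℂ[X], ∀ z, g z = P.eval z := by
  intro m
  induction m with
  | zero =>
    intro g hg C hC
    have hb : Bornology.IsBounded (Set.range g) := by
      rw [isBounded_iff_forall_norm_le]
      exact ⟨C, by rintro x ⟨z, rfl⟩; simpa using hC z⟩
    obtain ⟨c, hc⟩ := hg.exists_const_forall_eq_of_bounded hb
    exact ⟨Polynomial.C c, fun z => by simp [hc z]⟩
  | succ m ih =>
    intro g hg C hC
    set g1 : ℂ → ℂ := dslope g 0 with hg1def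
    have hg1 : Differentiable ℂ g1 := by
      rw [← differentiableOn_univ] at hg ⊢
      exact (Complex.differentiableOn_dslope (by simp : Set.univ ∈ nhds (0:ℂ))).mpr hg
    obtain ⟨M, hM⟩ := (isCompact_closedBall (0:ℂ) 1).exists_bound_of_continuousOn
      hg1.continuous.continuousOn
    have hC0 : 0 ≤ C := le_trans (norm_nonneg (g 0)) (by simpa using hC 0)
    have hM0 : 0 ≤ M := le_trans (norm_nonneg _) (hM 0 (Metric.mem_closedBall_self zero_le_one))
    have hbnd : ∀ z : ℂ, ‖g1 z‖ ≤ (max (4 * C) M) * (1 + ‖z‖) ^ m := by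
      intro z
      have h2 : (1:ℝ) ≤ (1 + ‖z‖) ^ m := one_le_pow₀ (by linarith [norm_nonneg z])
      have hpnn : (0:ℝ) ≤ (1 + ‖z‖) ^ m := by positivity
      rcases le_or_gt ‖z‖ 1 with hz | hz
      · have hMz := hM z (by simpa [Metric.mem_closedBall, dist_zero_right] using hz)
        calc ‖g1 z‖ ≤ M := hMz
          _ ≤ max (4 * C) M := le_max_right _ _
          _ ≤ (max (4 * C) M) * (1 + ‖z‖) ^ m :=
              le_mul_of_one_le_right (le_trans hM0 (le_max_right _ _)) h2
      · have hnz : (0:ℝ) < ‖z‖ := by linarith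
        have hz0 : z ≠ 0 := by
          intro h; rw [h] at hz; simp at hz; linarith
        have hds : g1 z = (g z - g 0) / z := by
          rw [hg1def, dslope_of_ne _ hz0, slope_def_field, sub_zero]
        have hgz : ‖g z - g 0‖ ≤ 2 * C * (1 + ‖z‖) ^ (m + 1) := by
          have e1 : ‖g z - g 0‖ ≤ ‖g z‖ + ‖g 0‖ := norm_sub_le _ _
          have e2 : ‖g 0‖ ≤ C := by simpa using hC 0
          have e3 : ‖g z‖ ≤ C * (1 + ‖z‖) ^ (m + 1) := hC z
          have e4 : (1:ℝ) ≤ (1 + ‖z‖) ^ (m + 1) := one_le_pow₀ (by linarith [norm_nonneg z])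
          nlinarith
        have hstep : ‖g1 z‖ * ‖z‖ ≤ 2 * C * (1 + ‖z‖) ^ (m + 1) := by
          rw [hds, norm_div, div_mul_cancel₀ _ hnz.ne']
          exact hgz
        have hpow : (1 + ‖z‖) ^ (m + 1) ≤ 2 * ‖z‖ * (1 + ‖z‖) ^ m := by
          rw [pow_succ]
          nlinarith
        have h4 : ‖g1 z‖ * ‖z‖ ≤ (4 * C * (1 + ‖z‖) ^ m) * ‖z‖ := by nlinarith
        have h5 : ‖g1 z‖ ≤ 4 * C * (1 + ‖z‖) ^ m := le_of_mul_le_mul_right (by linarith) hnz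
        calc ‖g1 z‖ ≤ 4 * C * (1 + ‖z‖) ^ m := h5
          _ ≤ (max (4 * C) M) * (1 + ‖z‖) ^ m :=
              mul_le_mul_of_nonneg_right (le_max_left _ _) hpnn
    obtain ⟨P, hP⟩ := ih g1 hg1 _ hbnd
    refine ⟨Polynomial.C (g 0) + Polynomial.X * P, fun z => ?_⟩
    rcases eq_or_ne z 0 with rfl | hz
    · simp
    · have h1 : g1 z = P.eval z := hP z
      have hds : g1 z = (g z - g 0) / z := by
        rw [hg1def, dslope_of_ne _ hz, slope_def_field, sub_zero]
      rw [hds] at h1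
      field_simp at h1
      simp only [eval_add, eval_mul, eval_C, eval_X]
      linear_combination h1


lemma wk_polyeval (P : ℂ[X]) :
    ∃ K : ℝ, 0 ≤ K ∧ ∀ z : ℂ, ‖P.eval z‖ ≤ K * (1 + ‖z‖) ^ P.natDegree := by
  refine ⟨∑ k ∈ Finset.range (P.natDegree + 1), ‖P.coeff k‖,
    Finset.sum_nonneg (fun _ _ => norm_nonneg _), fun z => ?_⟩
  conv_lhs => rw [Polynomial.eval_eq_sum_range]
  refine le_trans (norm_sum_le _ _) ?_
  rw [Finset.sum_mul]
  refine Finset.sum_le_sum fun k hk => ?_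
  rw [norm_mul, norm_pow]
  apply mul_le_mul_of_nonneg_left ?_ (norm_nonneg _)
  calc ‖z‖ ^ k ≤ (1 + ‖z‖) ^ k := pow_le_pow_left₀ (norm_nonneg z) (by linarith) k
    _ ≤ (1 + ‖z‖) ^ P.natDegree :=
        pow_le_pow_right₀ (by linarith [norm_nonneg z]) (Finset.mem_range_succ_iff.mp hk)

/-- (Wilkie) An exponential-polynomial sum `∑ qᵢ(z) e^{pᵢ(z)}` with at least two terms,
nonzero polynomial coefficients, and pairwise nonconstant exponent differences has a
complex zero. -/
theorem exp_polynomial_sum_has_zero (N : ℕ) (hN : 2 ≤ N)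
    (q p : Fin N → Polynomial ℂ)
    (hq : ∀ i, q i ≠ 0)
    (hp : ∀ i j, i ≠ j → (p i - p j).natDegree ≠ 0) :
    ∃ z : ℂ, ∑ i, (q i).eval z * Complex.exp ((p i).eval z) = 0 := by
  by_contra hcon
  push_neg at hcon
  set f : ℂ → ℂ := fun z => ∑ i, (q i).eval z * Complex.exp ((p i).eval z) with hfdef
  have hf : ∀ z, f z ≠ 0 := hcon
  set F' : ℂ → ℂ := fun z =>
    ∑ i, (derivative (q i) + q i * derivative (p i)).eval z * Complex.exp ((p i).eval z) with hF'def
  have hfD : ∀ z, HasDerivAt f (F' z) z := fun z => wk_hasDerivAt q p z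
  have hfdiff : Differentiable ℂ f := fun z => (hfD z).differentiableAt
  have hF'diff : Differentiable ℂ F' := fun z =>
    (wk_hasDerivAt (fun i => derivative (q i) + q i * derivative (p i)) p z).differentiableAt
  set h : ℂ → ℂ := fun z => F' z / f z with hhdef
  have hhdiff : Differentiable ℂ h := hF'diff.div hfdiff hf
  obtain ⟨g0, hg0⟩ := wk_exists_primitive h hhdiff
  have hg0diff : Differentiable ℂ g0 := fun z => (hg0 z).differentiableAt
  have hconst : ∀ z : ℂ, f z * Complex.exp (-g0 z) = f 0 * Complex.exp (-g0 0) := by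
    intro z
    have hd : ∀ w : ℂ, HasDerivAt (fun u => f u * Complex.exp (-g0 u)) 0 w := by
      intro w
      have h2 : HasDerivAt (fun u => Complex.exp (-g0 u)) (Complex.exp (-g0 w) * (-h w)) w :=
        (Complex.hasDerivAt_exp _).comp w ((hg0 w).neg)
      have h3 := (hfD w).mul h2
      refine h3.congr_deriv ?_
      have hw : h w = F' w / f w := rfl
      rw [hw]
      have hffs : f w * (Complex.exp (-g0 w) * -(F' w / f w))
          = -(F' w * Complex.exp (-g0 w)) := by
        field_simp [hf w]
      rw [hffs]
      ring
    exact is_const_of_deriv_eq_zero (fun w => (hd w).differentiableAt)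
      (fun w => (hd w).deriv) z 0
  set c : ℂ := f 0 * Complex.exp (-g0 0) with hcdef
  have hc : c ≠ 0 := mul_ne_zero (hf 0) (Complex.exp_ne_zero _)
  set g : ℂ → ℂ := fun z => g0 z + Complex.log c with hgdef
  have hgdiff : Differentiable ℂ g := hg0diff.add_const _
  have hexp : ∀ z, Complex.exp (g z) = f z := by
    intro z
    rw [hgdef]
    simp only
    rw [Complex.exp_add, Complex.exp_log hc]
    have hcz := hconst z
    rw [Complex.exp_neg] at hcz
    rw [← hcz]
    field_simp
  choose Kq hKq0 hKq using fun i => wk_polyeval (q i)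
  choose Kp hKp0 hKp using fun i => wk_polyeval (p i)
  set n : ℕ := Finset.univ.sup (fun i : Fin N => max (q i).natDegree (p i).natDegree) with hndef
  set A : ℝ := ∑ i, Kq i with hAdef
  set Kp' : ℝ := ∑ i, Kp i with hKp'def
  have hA0 : 0 ≤ A := Finset.sum_nonneg fun i _ => hKq0 i
  have hKp'0 : 0 ≤ Kp' := Finset.sum_nonneg fun i _ => hKp0 i
  have hq_deg : ∀ i : Fin N, (q i).natDegree ≤ n := fun i =>
    le_trans (le_max_left _ _)
      (Finset.le_sup (f := fun i : Fin N => max (q i).natDegree (p i).natDegree)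
        (Finset.mem_univ i))
  have hp_deg : ∀ i : Fin N, (p i).natDegree ≤ n := fun i =>
    le_trans (le_max_right _ _)
      (Finset.le_sup (f := fun i : Fin N => max (q i).natDegree (p i).natDegree)
        (Finset.mem_univ i))
  have hfb : ∀ z : ℂ, ‖f z‖ ≤ (A + 1) * (1 + ‖z‖) ^ n * Real.exp (Kp' * (1 + ‖z‖) ^ n) := by
    intro z
    have hS1 : (1:ℝ) ≤ 1 + ‖z‖ := by linarith [norm_nonneg z]
    have hterm : ∀ i : Fin N, ‖(q i).eval z * Complex.exp ((p i).eval z)‖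
        ≤ Kq i * ((1 + ‖z‖) ^ n * Real.exp (Kp' * (1 + ‖z‖) ^ n)) := by
      intro i
      rw [norm_mul]
      have e1 : ‖(q i).eval z‖ ≤ Kq i * (1 + ‖z‖) ^ n := by
        refine le_trans (hKq i z) ?_
        exact mul_le_mul_of_nonneg_left (pow_le_pow_right₀ hS1 (hq_deg i)) (hKq0 i)
      have e2 : ‖Complex.exp ((p i).eval z)‖ ≤ Real.exp (Kp' * (1 + ‖z‖) ^ n) := by
        rw [Complex.norm_exp]
        apply Real.exp_le_exp.mpr
        have e3 : ((p i).eval z).re ≤ ‖(p i).eval z‖ := Complex.re_le_norm _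
        have e4 : ‖(p i).eval z‖ ≤ Kp i * (1 + ‖z‖) ^ n := by
          refine le_trans (hKp i z) ?_
          exact mul_le_mul_of_nonneg_left (pow_le_pow_right₀ hS1 (hp_deg i)) (hKp0 i)
        have e5 : Kp i * (1 + ‖z‖) ^ n ≤ Kp' * (1 + ‖z‖) ^ n := by
          apply mul_le_mul_of_nonneg_right ?_ (by positivity)
          exact Finset.single_le_sum (fun j _ => hKp0 j) (Finset.mem_univ i)
        linarith
      calc ‖(q i).eval z‖ * ‖Complex.exp ((p i).eval z)‖
          ≤ (Kq i * (1 + ‖z‖) ^ n) * Real.exp (Kp' * (1 + ‖z‖) ^ n) :=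
            mul_le_mul e1 e2 (norm_nonneg _) (mul_nonneg (hKq0 i) (by positivity))
        _ = Kq i * ((1 + ‖z‖) ^ n * Real.exp (Kp' * (1 + ‖z‖) ^ n)) := by ring
    calc ‖f z‖ ≤ ∑ i, ‖(q i).eval z * Complex.exp ((p i).eval z)‖ := norm_sum_le _ _
      _ ≤ ∑ i, Kq i * ((1 + ‖z‖) ^ n * Real.exp (Kp' * (1 + ‖z‖) ^ n)) :=
          Finset.sum_le_sum fun i _ => hterm i
      _ = A * ((1 + ‖z‖) ^ n * Real.exp (Kp' * (1 + ‖z‖) ^ n)) := by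
          rw [hAdef, ← Finset.sum_mul]
      _ ≤ (A + 1) * (1 + ‖z‖) ^ n * Real.exp (Kp' * (1 + ‖z‖) ^ n) := by
          have hpos : (0:ℝ) ≤ (1 + ‖z‖) ^ n * Real.exp (Kp' * (1 + ‖z‖) ^ n) := by positivity
          nlinarith

  set B : ℝ := A + 1 + n + Kp' with hBdef
  have hB0 : 0 ≤ B := by positivity
  have hRe : ∀ z : ℂ, (g z).re ≤ B * (1 + ‖z‖) ^ (n + 1) := by
    intro z
    set S : ℝ := 1 + ‖z‖ with hSdef
    have hS1 : (1:ℝ) ≤ S := by rw [hSdef]; linarith [norm_nonneg z]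
    have hS0 : (0:ℝ) < S := by linarith
    have hre_eq : (g z).re = Real.log ‖f z‖ := by
      have hfe : ‖f z‖ = Real.exp ((g z).re) := by
        rw [← hexp z, Complex.norm_exp]
      rw [hfe, Real.log_exp]
    rw [hre_eq]
    have hfpos : 0 < ‖f z‖ := norm_pos_iff.mpr (hf z)
    have l1 : Real.log ‖f z‖ ≤ Real.log ((A + 1) * S ^ n * Real.exp (Kp' * S ^ n)) :=
      Real.log_le_log hfpos (hfb z)
    have l2 : Real.log ((A + 1) * S ^ n * Real.exp (Kp' * S ^ n))
        = Real.log (A + 1) + n * Real.log S + Kp' * S ^ n := by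
      rw [Real.log_mul (by positivity) (Real.exp_ne_zero _),
        Real.log_mul (by positivity) (by positivity), Real.log_pow, Real.log_exp]
    have l3 : Real.log (A + 1) ≤ A + 1 := by
      linarith [Real.log_le_sub_one_of_pos (by linarith : (0:ℝ) < A + 1)]
    have l4 : Real.log S ≤ S := by
      linarith [Real.log_le_sub_one_of_pos hS0]
    have l5 : S ≤ S ^ (n + 1) := le_self_pow₀ (by linarith) (Nat.succ_ne_zero n)
    have l6 : S ^ n ≤ S ^ (n + 1) := pow_le_pow_right₀ hS1 (Nat.le_succ n)
    have l7 : (1:ℝ) ≤ S ^ (n + 1) := one_le_pow₀ hS1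
    have hn0 : (0:ℝ) ≤ (n:ℝ) := Nat.cast_nonneg n
    have hlogS : 0 ≤ Real.log S := Real.log_nonneg hS1
    rw [hBdef]
    nlinarith [mul_le_mul_of_nonneg_left l5 hn0, mul_le_mul_of_nonneg_left l6 hKp'0,
      mul_le_mul_of_nonneg_left l4 hn0]
  obtain ⟨Cg, hCg⟩ := wk_polygrowth g hgdiff B (n + 1) hB0 hRe
  obtain ⟨G, hG⟩ := wk_poly (n + 1) g hgdiff Cg hCg
  have hexp2 : ∀ z : ℂ, f z = Complex.exp (G.eval z) := by
    intro z
    rw [← hG z, hexp z]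
  by_cases hcase : ∃ i₀ : Fin N, (p i₀ - G).natDegree = 0
  · obtain ⟨i₀, hi₀⟩ := hcase
    obtain ⟨a, ha⟩ := Polynomial.natDegree_eq_zero.mp hi₀
    have hGe : ∀ z : ℂ, G.eval z = (p i₀).eval z - a := by
      intro z
      have h1 := congrArg (Polynomial.eval z) ha
      simp only [eval_C, eval_sub] at h1
      linear_combination h1
    set r : Fin N → ℂ[X] :=
      fun i => if i = i₀ then q i - Polynomial.C (Complex.exp (-a)) else q i with hrdef
    have h0 : ∀ z : ℂ, ∑ i, (r i).eval z * Complex.exp ((p i).eval z) = 0 := by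
      intro z
      have hterm : ∀ i : Fin N, (r i).eval z * Complex.exp ((p i).eval z)
          = (q i).eval z * Complex.exp ((p i).eval z)
            - (if i = i₀ then Complex.exp (-a) * Complex.exp ((p i).eval z) else 0) := by
        intro i
        by_cases hii : i = i₀
        · subst hii
          simp [hrdef]
          try ring
        · simp only [hrdef, if_neg hii]
          ring
      rw [Finset.sum_congr rfl (fun i _ => hterm i), Finset.sum_sub_distrib]
      rw [Finset.sum_ite_eq' Finset.univ i₀
        (fun i => Complex.exp (-a) * Complex.exp ((p i).eval z))]
      have hfz : ∑ i, (q i).eval z * Complex.exp ((p i).eval z) = f z := rfl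
      rw [hfz, hexp2 z, hGe z, if_pos (Finset.mem_univ i₀), Complex.exp_sub, Complex.exp_neg]
      field_simp
      ring
    have hres := wk_indep N r p hp h0
    obtain ⟨j, hj⟩ : ∃ j : Fin N, j ≠ i₀ := by
      have : Nontrivial (Fin N) := Fin.nontrivial_iff_two_le.mpr hN
      exact exists_ne i₀
    have hj2 := hres j
    rw [hrdef] at hj2
    simp only [if_neg hj] at hj2
    exact hq j hj2
  · push_neg at hcase
    set r : Fin (N + 1) → ℂ[X] := Fin.snoc q (-(1 : ℂ[X])) with hrdef
    set s : Fin (N + 1) → ℂ[X] := Fin.snoc p G with hsdef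
    have hs : ∀ i j : Fin (N + 1), i ≠ j → (s i - s j).natDegree ≠ 0 := by
      intro i j hij
      rcases Fin.eq_castSucc_or_eq_last i with ⟨i', rfl⟩ | rfl <;>
        rcases Fin.eq_castSucc_or_eq_last j with ⟨j', rfl⟩ | rfl
      · rw [hsdef]
        simp only [Fin.snoc_castSucc]
        exact hp i' j' (fun hh => hij (congrArg Fin.castSucc hh))
      · rw [hsdef]
        simp only [Fin.snoc_castSucc, Fin.snoc_last]
        exact hcase i'
      · rw [hsdef]
        simp only [Fin.snoc_castSucc, Fin.snoc_last]
        rw [← neg_sub, natDegree_neg]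
        exact hcase j'
      · exact absurd rfl hij
    have h0 : ∀ z : ℂ, ∑ i, (r i).eval z * Complex.exp ((s i).eval z) = 0 := by
      intro z
      rw [Fin.sum_univ_castSucc]
      have hcs : ∀ i : Fin N, (r i.castSucc).eval z * Complex.exp ((s i.castSucc).eval z)
          = (q i).eval z * Complex.exp ((p i).eval z) := by
        intro i
        rw [hrdef, hsdef]
        simp only [Fin.snoc_castSucc]
      rw [Finset.sum_congr rfl (fun i _ => hcs i)]
      have hlast : (r (Fin.last N)).eval z * Complex.exp ((s (Fin.last N)).eval z)
          = -Complex.exp (G.eval z) := by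
        rw [hrdef, hsdef]
        simp only [Fin.snoc_last]
        simp
      rw [hlast]
      have hfz : ∑ i, (q i).eval z * Complex.exp ((p i).eval z) = f z := rfl
      rw [hfz, hexp2 z]
      ring
    have hres := wk_indep (N + 1) r s hs h0
    have hlast := hres (Fin.last N)
    rw [hrdef] at hlast
    simp only [Fin.snoc_last] at hlast
    exact (by simp : ¬(-(1 : ℂ[X]) = 0)) hlast
end
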